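/- arXiv:1805.07454 — 4 statements merged into one kernel-verified Lean document; each statement's English description precedes it below -/
import Mathlib

section
/- Combined deterministic consistency bound (the deterministic core of Theorem 1): Let H11 ∈ ℝ^{b×b} be symmetric, H12 ∈ ℝ^{b×m}, H21 := H12ᵀ, H22 ∈ ℝ^{m×m} symmetric, and let Λ_min, Λ'_min, Λ_max > 0 satisfy: λ_min(−H11) ≥ Λ'_min, λ_min(−H21·H11⁻¹·H12) ≥ Λ_min, ‖H21·H11⁻¹‖ ≤ Λ_max, ‖H11⁻¹·H12‖ ≤ Λ_max, and 2‖H22‖ ≤ Λ_min. Suppose vectors a ∈ ℝ^b, u ∈ ℝ^b, v ∈ ℝ^m satisfy a + H11·u + H12·v = 0 and H21·u + H22·v = 0. Then ‖v‖ ≤ (2·Λ_max/Λ_min)·‖a‖ and ‖u‖ ≤ ((2·Λ_max²·Λ'_min + Λ_min)/(Λ_min·Λ'_min))·‖a‖. -/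
/-!
Eliminating `u` with the first block equation turns the second one into the Schur-complement
system `(H22 - H21 H11⁻¹ H12) v = H21 H11⁻¹ a`. The coercivity constant `Λmin` of
`-H21 H11⁻¹ H12` survives, halved, the perturbation by `H22`, and a matrix coercive with
constant `c` cannot shrink vectors by more than the factor `c`; this bounds `v`. Then
`u = -(H11⁻¹ a + H11⁻¹ H12 v)`, where coercivity of `-H11` gives `Λ'min ‖H11⁻¹ a‖ ≤ ‖a‖`.
-/

open Matrix

/-- The Euclidean norm of a vector in `ℝ^k` represented as `Fin k → ℝ`. -/
noncomputable def euclNorm {k : ℕ} (v : Fin k → ℝ) : ℝ := Real.sqrt (v ⬝ᵥ v)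

section EuclNorm

variable {k : ℕ}

theorem euclNorm_eq_norm_toLp (x : Fin k → ℝ) : euclNorm x = ‖WithLp.toLp 2 x‖ := by
  rw [norm_eq_sqrt_real_inner, EuclideanSpace.inner_toLp_toLp, star_trivial]
  rfl

theorem euclNorm_nonneg (x : Fin k → ℝ) : 0 ≤ euclNorm x := Real.sqrt_nonneg _

theorem euclNorm_mul_self (x : Fin k → ℝ) : euclNorm x * euclNorm x = x ⬝ᵥ x :=
  Real.mul_self_sqrt (Finset.sum_nonneg fun i _ => mul_self_nonneg (x i))

theorem abs_dotProduct_le_euclNorm_mul (x y : Fin k → ℝ) :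
    |x ⬝ᵥ y| ≤ euclNorm x * euclNorm y := by
  rw [euclNorm_eq_norm_toLp, euclNorm_eq_norm_toLp, dotProduct_comm]
  simpa [EuclideanSpace.inner_toLp_toLp] using
    abs_real_inner_le_norm (WithLp.toLp 2 x) (WithLp.toLp 2 y)

theorem euclNorm_neg (x : Fin k → ℝ) : euclNorm (-x) = euclNorm x := by
  rw [euclNorm, neg_dotProduct, dotProduct_neg, neg_neg, euclNorm]

theorem euclNorm_add_le (x y : Fin k → ℝ) : euclNorm (x + y) ≤ euclNorm x + euclNorm y := by
  simp only [euclNorm_eq_norm_toLp, WithLp.toLp_add]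
  exact norm_add_le _ _

end EuclNorm

def IsCoerciveWith {k : ℕ} (c : ℝ) (A : Matrix (Fin k) (Fin k) ℝ) : Prop :=
  ∀ x : Fin k → ℝ, c * (x ⬝ᵥ x) ≤ x ⬝ᵥ A *ᵥ x

namespace IsCoerciveWith

variable {k : ℕ} {c : ℝ} {A E : Matrix (Fin k) (Fin k) ℝ}

theorem mul_euclNorm_le (hA : IsCoerciveWith c A) (x : Fin k → ℝ) :
    c * euclNorm x ≤ euclNorm (A *ᵥ x) := by
  rcases (euclNorm_nonneg x).eq_or_lt with hx | hx
  · rw [← hx, mul_zero]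
    exact euclNorm_nonneg _
  refine le_of_mul_le_mul_left ?_ hx
  calc euclNorm x * (c * euclNorm x) = c * (x ⬝ᵥ x) := by rw [← euclNorm_mul_self]; ring
    _ ≤ x ⬝ᵥ A *ᵥ x := hA x
    _ ≤ euclNorm x * euclNorm (A *ᵥ x) :=
      (le_abs_self _).trans (abs_dotProduct_le_euclNorm_mul _ _)

theorem isUnit (hA : IsCoerciveWith c A) (hc : 0 < c) : IsUnit A := by
  refine mulVec_injective_iff_isUnit.mp fun x y hxy => sub_eq_zero.mp ?_
  have hle : c * ((x - y) ⬝ᵥ (x - y)) ≤ 0 := by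
    simpa [mulVec_sub, hxy] using hA (x - y)
  exact dotProduct_self_eq_zero.mp <| le_antisymm (nonpos_of_mul_nonpos_right hle hc)
    (Finset.sum_nonneg fun i _ => mul_self_nonneg _)

theorem add_of_two_mul_euclNorm_le (hA : IsCoerciveWith c A)
    (hE : ∀ x, 2 * euclNorm (E *ᵥ x) ≤ c * euclNorm x) : IsCoerciveWith (c / 2) (A + E) := by
  intro x
  have hAx := hA x
  have hEx : -(euclNorm x * euclNorm (E *ᵥ x)) ≤ x ⬝ᵥ E *ᵥ x :=
    (abs_le.mp (abs_dotProduct_le_euclNorm_mul _ _)).1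
  have hsmall := mul_le_mul_of_nonneg_left (hE x) (euclNorm_nonneg x)
  rw [← euclNorm_mul_self] at hAx ⊢
  rw [add_mulVec, dotProduct_add]
  linarith

end IsCoerciveWith

section BlockSystem

variable {n p R : Type*} [Fintype n] [DecidableEq n] [Fintype p] [CommRing R]
  {A : Matrix n n R} {B : Matrix n p R} {C : Matrix p n R} {D : Matrix p p R}
  {a u : n → R} {v : p → R}

theorem eq_neg_inv_mulVec_of_add_mulVec_add_mulVec_eq_zero (hA : IsUnit A.det)
    (h : a + A *ᵥ u + B *ᵥ v = 0) : u = -(A⁻¹ *ᵥ a + (A⁻¹ * B) *ᵥ v) := by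
  have hAu : A *ᵥ u = -(a + B *ᵥ v) := by linear_combination h
  rw [← mulVec_mulVec, ← mulVec_add, ← mulVec_neg, ← hAu, mulVec_mulVec, nonsing_inv_mul _ hA,
    one_mulVec]

theorem schur_mulVec_eq_of_block_system (hA : IsUnit A.det)
    (h₁ : a + A *ᵥ u + B *ᵥ v = 0) (h₂ : C *ᵥ u + D *ᵥ v = 0) :
    (D - C * A⁻¹ * B) *ᵥ v = (C * A⁻¹) *ᵥ a := by
  rw [eq_neg_inv_mulVec_of_add_mulVec_add_mulVec_eq_zero hA h₁, mulVec_neg, mulVec_add,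
    mulVec_mulVec, mulVec_mulVec] at h₂
  rw [sub_mulVec, Matrix.mul_assoc]
  linear_combination h₂

end BlockSystem

theorem combined_consistency_bound_general {b m : ℕ}
    (H11 : Matrix (Fin b) (Fin b) ℝ) (H12 : Matrix (Fin b) (Fin m) ℝ)
    (H22 : Matrix (Fin m) (Fin m) ℝ)
    (Λmin Λ'min Λmax : ℝ) (hΛmin : 0 < Λmin) (hΛ'min : 0 < Λ'min) (hΛmax : 0 < Λmax)
    -- λ_min(-H11) ≥ Λ'min:
    (hminH11 : ∀ x : Fin b → ℝ, Λ'min * (x ⬝ᵥ x) ≤ x ⬝ᵥ (-H11).mulVec x)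
    -- λ_min(-H21 H11⁻¹ H12) ≥ Λmin:
    (hmin : ∀ x : Fin m → ℝ, Λmin * (x ⬝ᵥ x) ≤ x ⬝ᵥ (-(H12ᵀ * H11⁻¹ * H12)).mulVec x)
    -- ‖H21 H11⁻¹‖ ≤ Λmax:
    (hop1 : ∀ x : Fin b → ℝ, euclNorm ((H12ᵀ * H11⁻¹).mulVec x) ≤ Λmax * euclNorm x)
    -- ‖H11⁻¹ H12‖ ≤ Λmax:
    (hop2 : ∀ x : Fin m → ℝ, euclNorm ((H11⁻¹ * H12).mulVec x) ≤ Λmax * euclNorm x)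
    -- 2 ‖H22‖ ≤ Λmin:
    (hH22 : ∀ x : Fin m → ℝ, 2 * euclNorm (H22.mulVec x) ≤ Λmin * euclNorm x)
    (a u : Fin b → ℝ) (v : Fin m → ℝ)
    (h1 : a + H11.mulVec u + H12.mulVec v = 0)
    (h2 : H12ᵀ.mulVec u + H22.mulVec v = 0) :
    euclNorm v ≤ 2 * Λmax / Λmin * euclNorm a ∧
    euclNorm u ≤ (2 * Λmax ^ 2 * Λ'min + Λmin) / (Λmin * Λ'min) * euclNorm a := by
  have hH11 : IsCoerciveWith Λ'min (-H11) := hminH11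
  have hdet : IsUnit H11.det := by
    simpa using (isUnit_iff_isUnit_det _).mp (hH11.isUnit hΛ'min).neg
  have hschur : IsCoerciveWith (Λmin / 2) (H22 - H12ᵀ * H11⁻¹ * H12) := by
    rw [sub_eq_neg_add]
    exact IsCoerciveWith.add_of_two_mul_euclNorm_le hmin hH22
  have hv : Λmin / 2 * euclNorm v ≤ Λmax * euclNorm a :=
    calc Λmin / 2 * euclNorm v ≤ euclNorm ((H22 - H12ᵀ * H11⁻¹ * H12) *ᵥ v) :=
          hschur.mul_euclNorm_le v
      _ = euclNorm ((H12ᵀ * H11⁻¹) *ᵥ a) := by rw [schur_mulVec_eq_of_block_system hdet h1 h2]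
      _ ≤ Λmax * euclNorm a := hop1 a
  have hw : Λ'min * euclNorm (H11⁻¹ *ᵥ a) ≤ euclNorm a := by
    simpa [neg_mulVec, mulVec_mulVec, mul_nonsing_inv _ hdet, euclNorm_neg] using
      hH11.mul_euclNorm_le (H11⁻¹ *ᵥ a)
  have hu : euclNorm u ≤ euclNorm (H11⁻¹ *ᵥ a) + Λmax * euclNorm v := by
    rw [eq_neg_inv_mulVec_of_add_mulVec_add_mulVec_eq_zero hdet h1, euclNorm_neg]
    exact (euclNorm_add_le _ _).trans (add_le_add_right (hop2 v) _)
  have hv' : euclNorm v ≤ 2 * Λmax / Λmin * euclNorm a := by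
    rw [div_mul_eq_mul_div, le_div_iff₀ hΛmin]
    linarith
  refine ⟨hv', ?_⟩
  calc euclNorm u ≤ euclNorm a / Λ'min + Λmax * (2 * Λmax / Λmin * euclNorm a) := by
        rw [← le_div_iff₀' hΛ'min] at hw
        have := mul_le_mul_of_nonneg_left hv' hΛmax.le
        linarith
    _ = (2 * Λmax ^ 2 * Λ'min + Λmin) / (Λmin * Λ'min) * euclNorm a := by
        field_simp
        ring

/-- **Combined deterministic consistency bound** (the deterministic core of Theorem 1).
Under the eigenvalue and operator-norm conditions on the blocks of the Hessian, any
solution `(u, v)` of the mean-value first-order equations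
`a + H11 u + H12 v = 0`, `H21 u + H22 v = 0` (with `H21 = H12ᵀ`) satisfies
`‖v‖ ≤ (2 Λmax / Λmin) ‖a‖` and
`‖u‖ ≤ ((2 Λmax² Λ'min + Λmin) / (Λmin Λ'min)) ‖a‖`. -/
theorem combined_consistency_bound {b m : ℕ}
    (H11 : Matrix (Fin b) (Fin b) ℝ) (H12 : Matrix (Fin b) (Fin m) ℝ)
    (H22 : Matrix (Fin m) (Fin m) ℝ)
    (hH11sym : H11.IsSymm) (hH22sym : H22.IsSymm)
    (Λmin Λ'min Λmax : ℝ) (hΛmin : 0 < Λmin) (hΛ'min : 0 < Λ'min) (hΛmax : 0 < Λmax)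
    -- λ_min(-H11) ≥ Λ'min:
    (hminH11 : ∀ x : Fin b → ℝ, Λ'min * (x ⬝ᵥ x) ≤ x ⬝ᵥ (-H11).mulVec x)
    -- λ_min(-H21 H11⁻¹ H12) ≥ Λmin:
    (hmin : ∀ x : Fin m → ℝ, Λmin * (x ⬝ᵥ x) ≤ x ⬝ᵥ (-(H12ᵀ * H11⁻¹ * H12)).mulVec x)
    -- ‖H21 H11⁻¹‖ ≤ Λmax:
    (hop1 : ∀ x : Fin b → ℝ, euclNorm ((H12ᵀ * H11⁻¹).mulVec x) ≤ Λmax * euclNorm x)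
    -- ‖H11⁻¹ H12‖ ≤ Λmax:
    (hop2 : ∀ x : Fin m → ℝ, euclNorm ((H11⁻¹ * H12).mulVec x) ≤ Λmax * euclNorm x)
    -- 2 ‖H22‖ ≤ Λmin:
    (hH22 : ∀ x : Fin m → ℝ, 2 * euclNorm (H22.mulVec x) ≤ Λmin * euclNorm x)
    (a u : Fin b → ℝ) (v : Fin m → ℝ)
    (h1 : a + H11.mulVec u + H12.mulVec v = 0)
    (h2 : H12ᵀ.mulVec u + H22.mulVec v = 0) :
    euclNorm v ≤ 2 * Λmax / Λmin * euclNorm a ∧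
    euclNorm u ≤ (2 * Λmax ^ 2 * Λ'min + Λmin) / (Λmin * Λ'min) * euclNorm a :=
  combined_consistency_bound_general H11 H12 H22 Λmin Λ'min Λmax hΛmin hΛ'min hΛmax hminH11 hmin
    hop1 hop2 hH22 a u v h1 h2
end

section
/- Corollary (Monotonicity of the asymptotic variance): Let E be a real Hilbert space, let W ⊆ W̄ be complete (e.g. finite-dimensional) subspaces of E, and let P_W and P_{W̄} denote the corresponding orthogonal projections. Then for any vectors s_1, …, s_m ∈ E, the Gram matrices of their projections satisfy (⟨P_W s_i, P_W s_j⟩)_{ij} ⪯ (⟨P_{W̄} s_i, P_{W̄} s_j⟩)_{ij} in the positive-semidefinite order; that is, for every c ∈ ℝ^m, ‖P_W(Σ_i c_i s_i)‖² ≤ ‖P_{W̄}(Σ_i c_i s_i)‖². Consequently, if both Gram matrices are invertible, the corresponding asymptotic variances satisfy V_{W̄} ⪯ V_W, where V_W := ((⟨P_W s_i, P_W s_j⟩)_{ij})⁻¹. -/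
/-!
For `W ≤ W̄` the projection `P_W` factors through `P_W̄`, so `‖P_W x‖ ≤ ‖P_W̄ x‖`; applied to
`x = ∑ cᵢ sᵢ` this is the quadratic-form inequality of the two Gram matrices `G_W ≤ G_W̄`.
Once `G_W` is invertible it is positive definite, and inversion reverses the Loewner order on
positive definite matrices.
-/

open Matrix
open scoped RealInnerProductSpace ComplexOrder

namespace Matrix

theorem PosDef.posSemidef_inv_sub_inv {K n : Type*} [Field K] [PartialOrder K] [StarRing K]
    [StarOrderedRing K] [Fintype n] [DecidableEq n] {A B : Matrix n n K} (hA : A.PosDef)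
    (hBA : (B - A).PosSemidef) : (A⁻¹ - B⁻¹).PosSemidef := by
  have hB : B.PosDef := by simpa only [add_sub_cancel] using hA.add_posSemidef hBA
  let := hA.isUnit.invertible
  let := hA.inv.isUnit.invertible
  let := hB.isUnit.invertible
  -- `A⁻¹ - B⁻¹` and `B - A` are the two Schur complements of `[[B, 1], [1, A⁻¹]]`.
  have h₂₂ := PosDef.fromBlocks₂₂ B (1 : Matrix n n K) hA.inv
  have h₁₁ := PosDef.fromBlocks₁₁ (1 : Matrix n n K) A⁻¹ hB
  simp only [conjTranspose_one, mul_one, one_mul, inv_inv_of_invertible] at h₂₂ h₁₁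
  exact h₁₁.mp (h₂₂.mpr hBA)

variable {𝕜 E ι : Type*} [RCLike 𝕜] [NormedAddCommGroup E] [InnerProductSpace 𝕜 E] [Fintype ι]

theorem star_dotProduct_gram_mulVec_self (v : ι → E) (c : ι → 𝕜) :
    star c ⬝ᵥ gram 𝕜 v *ᵥ c = ((‖∑ i, c i • v i‖ ^ 2 : ℝ) : 𝕜) := by
  rw [star_dotProduct_gram_mulVec, inner_self_eq_norm_sq_to_K]; norm_cast

theorem posSemidef_gram_sub_gram_of_norm_le {u v : ι → E}
    (h : ∀ c : ι → 𝕜, ‖∑ i, c i • u i‖ ≤ ‖∑ i, c i • v i‖) :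
    (gram 𝕜 v - gram 𝕜 u).PosSemidef := by
  refine .of_dotProduct_mulVec_nonneg ((isHermitian_gram 𝕜 v).sub (isHermitian_gram 𝕜 u)) fun c => ?_
  rw [sub_mulVec, dotProduct_sub, sub_nonneg, star_dotProduct_gram_mulVec_self,
    star_dotProduct_gram_mulVec_self, RCLike.ofReal_le_ofReal]
  gcongr
  exact h c

end Matrix

theorem Submodule.norm_orthogonalProjectionOnto_le_of_le {𝕜 E : Type*} [RCLike 𝕜]
    [NormedAddCommGroup E] [InnerProductSpace 𝕜 E] {U V : Submodule 𝕜 E}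
    [U.HasOrthogonalProjection] [V.HasOrthogonalProjection] (h : U ≤ V) (x : E) :
    ‖orthogonalProjectionOnto U x‖ ≤ ‖orthogonalProjectionOnto V x‖ := by
  rw [← orthogonalProjectionOnto_starProjection_of_le h]
  exact U.norm_orthogonalProjectionOnto_apply_le _

/-- **Corollary (Monotonicity of the asymptotic variance).**
If `W ⊆ W̄` are complete subspaces of a real Hilbert space, then for any `s₁, …, s_m` the
Gram matrix of the projections onto `W` is dominated (in the positive-semidefinite order)
by that of the projections onto `W̄`; equivalently `‖P_W(Σ cᵢ sᵢ)‖² ≤ ‖P_W̄(Σ cᵢ sᵢ)‖²`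
for every `c`.  Consequently, if both Gram matrices are invertible, the corresponding
asymptotic variances satisfy `V_W̄ ⪯ V_W`. -/
theorem asymptotic_variance_monotonicity
    {E : Type*} [NormedAddCommGroup E] [InnerProductSpace ℝ E]
    (W Wbar : Submodule ℝ E) [CompleteSpace W] [CompleteSpace Wbar]
    (hsub : W ≤ Wbar)
    {m : ℕ} (s : Fin m → E) :
    (∀ c : Fin m → ℝ,
      ‖(Submodule.orthogonalProjectionOnto W (∑ i, c i • s i) : E)‖ ^ 2 ≤
        ‖(Submodule.orthogonalProjectionOnto Wbar (∑ i, c i • s i) : E)‖ ^ 2) ∧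
    ((Matrix.of fun i j =>
        ⟪(Submodule.orthogonalProjectionOnto Wbar (s i) : E), (Submodule.orthogonalProjectionOnto Wbar (s j) : E)⟫) -
      (Matrix.of fun i j =>
        ⟪(Submodule.orthogonalProjectionOnto W (s i) : E), (Submodule.orthogonalProjectionOnto W (s j) : E)⟫)).PosSemidef ∧
    (IsUnit (Matrix.of fun i j =>
        ⟪(Submodule.orthogonalProjectionOnto W (s i) : E), (Submodule.orthogonalProjectionOnto W (s j) : E)⟫ :
          Matrix (Fin m) (Fin m) ℝ).det →
      IsUnit (Matrix.of fun i j =>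
        ⟪(Submodule.orthogonalProjectionOnto Wbar (s i) : E), (Submodule.orthogonalProjectionOnto Wbar (s j) : E)⟫ :
          Matrix (Fin m) (Fin m) ℝ).det →
      ((Matrix.of fun i j =>
          ⟪(Submodule.orthogonalProjectionOnto W (s i) : E), (Submodule.orthogonalProjectionOnto W (s j) : E)⟫)⁻¹ -
        (Matrix.of fun i j =>
          ⟪(Submodule.orthogonalProjectionOnto Wbar (s i) : E),
            (Submodule.orthogonalProjectionOnto Wbar (s j) : E)⟫)⁻¹).PosSemidef) := by
  have hnorm (c : Fin m → ℝ) :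
      ‖(Submodule.orthogonalProjectionOnto W (∑ i, c i • s i) : E)‖ ≤
        ‖(Submodule.orthogonalProjectionOnto Wbar (∑ i, c i • s i) : E)‖ :=
    Submodule.norm_orthogonalProjectionOnto_le_of_le hsub _
  have hgram : (gram ℝ (fun i => (Submodule.orthogonalProjectionOnto Wbar (s i) : E)) -
      gram ℝ (fun i => (Submodule.orthogonalProjectionOnto W (s i) : E))).PosSemidef :=
    posSemidef_gram_sub_gram_of_norm_le fun c => by
      simpa only [map_sum, map_smul, Submodule.coe_sum, Submodule.coe_smul] using hnorm c
  refine ⟨fun c => by gcongr; exact hnorm c, hgram, fun hW _ => ?_⟩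
  have hWpos := (posSemidef_gram ℝ _).posDef_iff_isUnit.mpr ((isUnit_iff_isUnit_det _).mpr hW)
  exact hWpos.posSemidef_inv_sub_inv hgram
end

section
/- Weak duality for Stein density ratio estimation (part of Proposition 3): Let t_1, …, t_n ∈ ℝ^b. Let δ ∈ ℝ^b satisfy ⟨δ, t_i⟩ + 1 > 0 for all i, and let μ ∈ ℝ^n satisfy μ_i < 0 for all i and Σ_{i=1}^n μ_i·t_i = 0. Then Σ_{i=1}^n log(⟨δ, t_i⟩ + 1) ≤ Σ_{i=1}^n (−log(−μ_i) − 1) − Σ_{i=1}^n μ_i. -/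
open Matrix

lemma log_add_mul_le (x m : ℝ) (hx : 0 < x) (hm : m < 0) :
    Real.log x ≤ -Real.log (-m) - 1 - m * x := by
  have hpos : 0 < -m * x := mul_pos (by linarith) hx
  have h := Real.log_le_sub_one_of_pos hpos
  rw [Real.log_mul (by linarith) (ne_of_gt hx)] at h
  linarith

/-- **Weak duality for Stein density ratio estimation** (part of Proposition 3).
If `δ` is primal feasible (`⟨δ, tᵢ⟩ + 1 > 0`) and `μ` is dual feasible (`μᵢ < 0`,
`Σ μᵢ tᵢ = 0`), then the primal objective is at most the dual objective:
`Σ log(⟨δ, tᵢ⟩ + 1) ≤ Σ (-log(-μᵢ) - 1) - Σ μᵢ`. -/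
theorem sdre_weak_duality {n b : ℕ} (t : Fin n → (Fin b → ℝ))
    (δ : Fin b → ℝ) (hδ : ∀ i, 0 < δ ⬝ᵥ t i + 1)
    (μ : Fin n → ℝ) (hμ : ∀ i, μ i < 0)
    (hfeas : ∑ i, μ i • t i = 0) :
    ∑ i, Real.log (δ ⬝ᵥ t i + 1) ≤
      (∑ i, (-Real.log (-μ i) - 1)) - ∑ i, μ i := by
  have hzero : ∑ i, μ i * (δ ⬝ᵥ t i) = 0 := by
    have : δ ⬝ᵥ (∑ i, μ i • t i) = 0 := by rw [hfeas]; simp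
    rw [← this]
    simp [dotProduct, Finset.mul_sum, Finset.sum_mul]
    rw [Finset.sum_comm]
    congr 1; ext i; congr 1; ext j; ring
  have key : ∀ i, Real.log (δ ⬝ᵥ t i + 1) ≤
      (-Real.log (-μ i) - 1) - μ i * (δ ⬝ᵥ t i + 1) := fun i =>
    log_add_mul_le _ _ (hδ i) (hμ i)
  calc ∑ i, Real.log (δ ⬝ᵥ t i + 1)
      ≤ ∑ i, ((-Real.log (-μ i) - 1) - μ i * (δ ⬝ᵥ t i + 1)) :=
        Finset.sum_le_sum fun i _ => key i
    _ = (∑ i, (-Real.log (-μ i) - 1)) - ∑ i, μ i := by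
        rw [Finset.sum_sub_distrib]
        congr 1
        have : ∑ i, μ i * (δ ⬝ᵥ t i + 1) = ∑ i, (μ i * (δ ⬝ᵥ t i) + μ i) := by
          congr 1; ext i; ring
        rw [this, Finset.sum_add_distrib, hzero, zero_add]
end

section
/- Zero duality gap at a stationary point of the SDRE problem (part of Proposition 3): Let t_1, …, t_n ∈ ℝ^b and suppose δ̂ ∈ ℝ^b satisfies ⟨δ̂, t_i⟩ + 1 > 0 for all i and the first-order condition Σ_{i=1}^n t_i/(⟨δ̂, t_i⟩ + 1) = 0. Define μ̂_i := −1/(⟨δ̂, t_i⟩ + 1). Then μ̂ is dual feasible, i.e. μ̂_i < 0 for all i and Σ_{i=1}^n μ̂_i·t_i = 0, and the dual objective equals the primal objective: Σ_{i=1}^n (−log(−μ̂_i) − 1) − Σ_{i=1}^n μ̂_i = Σ_{i=1}^n log(⟨δ̂, t_i⟩ + 1). Moreover the primal ratio values satisfy ⟨δ̂, t_i⟩ + 1 = −1/μ̂_i. -/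
open Matrix

/-! Write `aᵢ = ⟨δ̂, tᵢ⟩ + 1 > 0`, so `μ̂ᵢ = -aᵢ⁻¹`. Dual feasibility is the first-order
condition multiplied by `-1`. Pairing the first-order condition with `δ̂` gives
`Σ aᵢ⁻¹ (aᵢ - 1) = 0`, i.e. `Σ aᵢ⁻¹ = n`; this is exactly what makes the linear part
`-n - Σ μ̂ᵢ` of the dual objective vanish, leaving `Σ -log aᵢ⁻¹ = Σ log aᵢ`. -/

theorem sum_inv_eq_card_of_sum_inv_smul_eq_zero {K ι κ : Type*} [Field K] [Fintype ι]
    [Fintype κ] (t : ι → κ → K) (δ : κ → K) (hne : ∀ i, δ ⬝ᵥ t i + 1 ≠ 0)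
    (hstat : ∑ i, (δ ⬝ᵥ t i + 1)⁻¹ • t i = 0) :
    ∑ i, (δ ⬝ᵥ t i + 1)⁻¹ = Fintype.card ι := by
  have hpair : ∑ i, (δ ⬝ᵥ t i + 1)⁻¹ * (δ ⬝ᵥ t i) = 0 := by
    simpa only [dotProduct_sum, dotProduct_smul, smul_eq_mul, dotProduct_zero]
      using congrArg (δ ⬝ᵥ ·) hstat
  have hterm : ∀ i, (δ ⬝ᵥ t i + 1)⁻¹ * (δ ⬝ᵥ t i) = 1 - (δ ⬝ᵥ t i + 1)⁻¹ := fun i => by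
    field_simp [hne i]
    ring
  simp only [hterm, Finset.sum_sub_distrib, Finset.sum_const, Finset.card_univ,
    nsmul_eq_mul, mul_one] at hpair
  exact (sub_eq_zero.mp hpair).symm

/-- **Zero duality gap at a stationary point of the SDRE problem** (part of Proposition 3).
If `δ̂` is primal feasible and satisfies the first-order condition
`Σ tᵢ / (⟨δ̂, tᵢ⟩ + 1) = 0`, then `μ̂ᵢ := -1/(⟨δ̂, tᵢ⟩ + 1)` is dual feasible, the dual
objective equals the primal objective, and `⟨δ̂, tᵢ⟩ + 1 = -1/μ̂ᵢ`. -/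
theorem sdre_zero_duality_gap {n b : ℕ} (t : Fin n → (Fin b → ℝ))
    (δhat : Fin b → ℝ) (hδ : ∀ i, 0 < δhat ⬝ᵥ t i + 1)
    (hstat : ∑ i, (δhat ⬝ᵥ t i + 1)⁻¹ • t i = 0)
    (μhat : Fin n → ℝ) (hμhat : ∀ i, μhat i = -(δhat ⬝ᵥ t i + 1)⁻¹) :
    (∀ i, μhat i < 0) ∧
    (∑ i, μhat i • t i = 0) ∧
    ((∑ i, (-Real.log (-μhat i) - 1)) - ∑ i, μhat i
      = ∑ i, Real.log (δhat ⬝ᵥ t i + 1)) ∧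
    (∀ i, δhat ⬝ᵥ t i + 1 = -(μhat i)⁻¹) := by
  have hsum : ∑ i, (δhat ⬝ᵥ t i + 1)⁻¹ = n := by
    simpa using sum_inv_eq_card_of_sum_inv_smul_eq_zero t δhat (fun i => (hδ i).ne') hstat
  simp only [hμhat]
  refine ⟨fun i => neg_neg_of_pos (inv_pos.mpr (hδ i)), ?_, ?_,
    fun i => by rw [inv_neg, neg_neg, inv_inv]⟩
  · simp only [neg_smul, Finset.sum_neg_distrib, hstat, neg_zero]
  · simp only [neg_neg, Real.log_inv, Finset.sum_sub_distrib, Finset.sum_neg_distrib, hsum,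
      Finset.sum_const, Finset.card_univ, Fintype.card_fin, nsmul_eq_mul, mul_one]
    ring
end
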